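/- arXiv:0710.2269 — 2 statements merged into one kernel-verified Lean document; each statement's English description precedes it below -/
import Mathlib

section
/- For any ring R and natural number n ≥ 1, tensoring with the (M_n(R), R)-bimodule Rⁿ induces an isomorphism K₀(R) ≅ K₀(M_n(R)) (Morita equivalence for K₀). -/
universe u

/-- A bundled finitely generated projective `R`-module. -/
structure FGProj (R : Type u) [Ring R] : Type (u + 1) where
  carrier : Type u
  [isAddCommGroup : AddCommGroup carrier]
  [isModule : Module R carrier]
  [isFinite : Module.Finite R carrier]
  [isProjective : Module.Projective R carrier]

attribute [instance] FGProj.isAddCommGroup FGProj.isModule FGProj.isFinite FGProj.isProjective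

instance (R : Type u) [Ring R] : CoeSort (FGProj R) (Type u) := ⟨FGProj.carrier⟩

/-- The relations defining the projective class group: `[M] + [N] = [P]` whenever
`M ⊕ N ≅ P`. -/
def K0Rels (R : Type u) [Ring R] : AddSubgroup (FreeAbelianGroup (FGProj R)) :=
  AddSubgroup.closure
    {x | ∃ M N P : FGProj R, Nonempty ((M × N : Type u) ≃ₗ[R] P) ∧
      x = FreeAbelianGroup.of M + FreeAbelianGroup.of N - FreeAbelianGroup.of P}

/-- The projective class group `K₀(R)`. -/
abbrev K0 (R : Type u) [Ring R] :=
  FreeAbelianGroup (FGProj R) ⧸ K0Rels R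

/-- The class `[M] ∈ K₀(R)` of a finitely generated projective module. -/
def K0.mk {R : Type u} [Ring R] (M : FGProj R) : K0 R :=
  QuotientAddGroup.mk (FreeAbelianGroup.of M)

section MatrixModule

variable {R : Type u} [Ring R] {n : ℕ} {M : Type u} [AddCommGroup M] [Module R M]

/-- The action of the matrix ring `Mₙ(R)` on `Mⁿ` by matrix multiplication. -/
instance matrixSMul : SMul (Matrix (Fin n) (Fin n) R) (Fin n → M) :=
  ⟨fun A v i => ∑ j, A i j • v j⟩

/-- `Mⁿ` as a module over the matrix ring `Mₙ(R)`; for `M = P` an `R`-module this is the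
module `Rⁿ ⊗_R P ≅ Pⁿ` obtained by tensoring with the `(Mₙ(R), R)`-bimodule `Rⁿ`. -/
instance matrixModule : Module (Matrix (Fin n) (Fin n) R) (Fin n → M) where
  one_smul v := by
    funext i
    show (∑ j, (1 : Matrix (Fin n) (Fin n) R) i j • v j) = v i
    simp [Matrix.one_apply, ite_smul]
  mul_smul A B v := by
    funext i
    show (∑ j, (A * B) i j • v j) = ∑ j, A i j • ∑ l, B j l • v l
    simp only [Matrix.mul_apply, Finset.sum_smul, Finset.smul_sum, mul_smul]
    exact Finset.sum_comm
  smul_zero A := by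
    funext i
    show (∑ j, A i j • (0 : M)) = 0
    simp
  smul_add A v w := by
    funext i
    show (∑ j, A i j • (v j + w j)) = (∑ j, A i j • v j) + ∑ j, A i j • w j
    simp [smul_add, Finset.sum_add_distrib]
  add_smul A B v := by
    funext i
    show (∑ j, (A + B) i j • v j) = (∑ j, A i j • v j) + ∑ j, B i j • v j
    simp [Matrix.add_apply, add_smul, Finset.sum_add_distrib]
  zero_smul v := by
    funext i
    show (∑ j, (0 : Matrix (Fin n) (Fin n) R) i j • v j) = 0
    simp

end MatrixModule

/-!
The functors `P ↦ Pⁿ` and `Q ↦ e₁₁Q` form Mathlib's equivalence `ModuleCat R ≌ ModuleCat Mₙ(R)`.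
An equivalence of module categories preserves projectivity and binary products, and its unit
and counit identify `[G (F P)]` with `[P]` and `[F (G Q)]` with `[Q]`; so as soon as both functors
preserve finite generation, it induces an isomorphism of `K₀`. Here `Pⁿ` is finitely generated
already over the scalar matrices, and `e₁₁Q` is an `R`-linear image of `Q`, which is finitely
generated over `R` because `Mₙ(R)` is.
-/

open CategoryTheory Limits

namespace K0

variable {R : Type u} [Ring R]

theorem mk_add_mk {A B C : FGProj R} (e : (A × B : Type u) ≃ₗ[R] C) :
    mk A + mk B = mk C := by
  have hrel : FreeAbelianGroup.of A + FreeAbelianGroup.of B - FreeAbelianGroup.of C ∈ K0Rels R :=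
    AddSubgroup.subset_closure ⟨A, B, C, ⟨e⟩, rfl⟩
  rw [← sub_eq_zero]
  exact (QuotientAddGroup.eq_zero_iff _).mpr hrel

theorem mk_eq_mk_of_linearEquiv {A B : FGProj R} (e : (A : Type u) ≃ₗ[R] B) : mk A = mk B :=
  add_right_cancel (b := mk B) <|
    (mk_add_mk (C := ⟨(A × B : Type u)⟩) (LinearEquiv.refl R _)).trans
      (mk_add_mk (e.prodCongr (LinearEquiv.refl R B)).symm).symm

variable {G : Type*} [AddCommGroup G]

def lift (f : FGProj R → G)
    (hf : ∀ A B C : FGProj R, ((A × B : Type u) ≃ₗ[R] C) → f A + f B = f C) : K0 R →+ G :=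
  QuotientAddGroup.lift _ (FreeAbelianGroup.lift f) <| (AddSubgroup.closure_le _).mpr <| by
    rintro _ ⟨A, B, C, ⟨e⟩, rfl⟩
    simp [hf A B C e]

@[simp]
theorem lift_mk (f : FGProj R → G)
    (hf : ∀ A B C : FGProj R, ((A × B : Type u) ≃ₗ[R] C) → f A + f B = f C) (P : FGProj R) :
    lift f hf (mk P) = f P :=
  FreeAbelianGroup.lift_apply_of f P

@[ext]
theorem hom_ext {φ ψ : K0 R →+ G} (h : ∀ P, φ (mk P) = ψ (mk P)) : φ = ψ :=
  QuotientAddGroup.addMonoidHom_ext _ (FreeAbelianGroup.lift_ext _ _ h)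

end K0

noncomputable def ModuleCat.prodIsoProd {R : Type u} [Ring R] (M N : ModuleCat.{u} R) :
    M ⨯ N ≅ .of R (M × N) :=
  limit.isoLimitCone (ModuleCat.binaryProductLimitCone M N)

namespace CategoryTheory.Functor

variable {R S : Type u} [Ring R] [Ring S] (F : ModuleCat.{u} R ⥤ ModuleCat.{u} S) [F.IsEquivalence]

noncomputable def mapProdLinearEquiv (A B : ModuleCat.{u} R) :
    F.obj (.of R (A × B)) ≃ₗ[S] F.obj A × F.obj B :=
  (F.mapIso (ModuleCat.prodIsoProd A B).symm ≪≫ PreservesLimitPair.iso F A B ≪≫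
    ModuleCat.prodIsoProd _ _).toLinearEquiv

theorem moduleProjective_obj (P : ModuleCat.{u} R) [Module.Projective R P] :
    Module.Projective S (F.obj P) := by
  rw [IsProjective.iff_projective]
  exact (F.asEquivalence.map_projective_iff P).mpr ((IsProjective.iff_projective P).mp ‹_›)

end CategoryTheory.Functor

namespace FGProj

variable {R S : Type u} [Ring R] [Ring S]

noncomputable def mapOfIsEquivalence (F : ModuleCat.{u} R ⥤ ModuleCat.{u} S) [F.IsEquivalence]
    (hF : ∀ P : FGProj R, Module.Finite S (F.obj (.of R P))) (P : FGProj R) : FGProj S :=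
  have := hF P
  have := F.moduleProjective_obj (.of R P)
  ⟨F.obj (.of R P)⟩

end FGProj

namespace K0

variable {R S : Type u} [Ring R] [Ring S]

noncomputable def mapOfIsEquivalence (F : ModuleCat.{u} R ⥤ ModuleCat.{u} S) [F.IsEquivalence]
    (hF : ∀ P : FGProj R, Module.Finite S (F.obj (.of R P))) : K0 R →+ K0 S :=
  lift (fun P => mk (FGProj.mapOfIsEquivalence F hF P)) fun A B _ e =>
    mk_add_mk ((F.mapProdLinearEquiv (.of R A) (.of R B)).symm ≪≫ₗ
      (F.mapIso e.toModuleIso).toLinearEquiv)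

theorem mapOfIsEquivalence_mk (F : ModuleCat.{u} R ⥤ ModuleCat.{u} S) [F.IsEquivalence]
    (hF : ∀ P : FGProj R, Module.Finite S (F.obj (.of R P))) (P : FGProj R) :
    mapOfIsEquivalence F hF (mk P) = mk (FGProj.mapOfIsEquivalence F hF P) :=
  lift_mk _ _ P

noncomputable def congrOfEquivalence (E : ModuleCat.{u} R ≌ ModuleCat.{u} S)
    (hF : ∀ P : FGProj R, Module.Finite S (E.functor.obj (.of R P)))
    (hG : ∀ Q : FGProj S, Module.Finite R (E.inverse.obj (.of S Q))) : K0 R ≃+ K0 S :=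
  AddMonoidHom.toAddEquiv (mapOfIsEquivalence E.functor hF) (mapOfIsEquivalence E.inverse hG)
    (hom_ext fun P => by
      simp only [AddMonoidHom.comp_apply, mapOfIsEquivalence_mk]
      exact (mk_eq_mk_of_linearEquiv (E.unitIso.app (.of R P)).toLinearEquiv).symm)
    (hom_ext fun Q => by
      simp only [AddMonoidHom.comp_apply, mapOfIsEquivalence_mk]
      exact mk_eq_mk_of_linearEquiv (E.counitIso.app (.of S Q)).toLinearEquiv)

theorem congrOfEquivalence_mk (E : ModuleCat.{u} R ≌ ModuleCat.{u} S)
    (hF : ∀ P : FGProj R, Module.Finite S (E.functor.obj (.of R P)))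
    (hG : ∀ Q : FGProj S, Module.Finite R (E.inverse.obj (.of S Q))) (P : FGProj R) :
    congrOfEquivalence E hF hG (mk P) = mk (FGProj.mapOfIsEquivalence E.functor hF P) :=
  mapOfIsEquivalence_mk _ _ P

end K0

section MatrixMorita

variable (R : Type u) [Ring R] {ι : Type} [Fintype ι] [DecidableEq ι] (i : ι)

open Matrix.Module in
theorem finite_toMatrixModCat_obj (P : ModuleCat.{u} R) [Module.Finite R P] :
    Module.Finite (Matrix ι ι R) ((ModuleCat.matrixEquivalence R i).functor.obj P) :=
  Module.Finite.of_restrictScalars_finite R (Matrix ι ι R) (ι → P)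

theorem finite_toModuleCat_obj (Q : ModuleCat.{u} (Matrix ι ι R)) [Module.Finite (Matrix ι ι R) Q] :
    Module.Finite R ((ModuleCat.matrixEquivalence R i).inverse.obj Q) := by
  let := Module.compHom Q (Matrix.scalar (α := R) ι)
  have := MatrixModCat.isScalarTower_toModuleCat R Q
  have : Module.Finite R Q := Module.Finite.trans (Matrix ι ι R) Q
  exact Module.Finite.range _

end MatrixMorita

/-- Morita equivalence for `K₀`: for any ring `R` and `n ≥ 1`, tensoring with the
`(Mₙ(R), R)`-bimodule `Rⁿ` (sending an `R`-module `P` to the `Mₙ(R)`-module `Pⁿ`)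
induces an isomorphism `K₀(R) ≅ K₀(Mₙ(R))`. -/
theorem k0_morita (R : Type u) [Ring R] (n : ℕ) (hn : 1 ≤ n) :
    ∃ e : K0 R ≃+ K0 (Matrix (Fin n) (Fin n) R),
      ∀ (P : FGProj R) (Q : FGProj (Matrix (Fin n) (Fin n) R)),
        Nonempty ((Q : Type u) ≃ₗ[Matrix (Fin n) (Fin n) R] (Fin n → (P : Type u))) →
        e (K0.mk P) = K0.mk Q := by
  let E := ModuleCat.matrixEquivalence R (⟨0, hn⟩ : Fin n)
  refine ⟨K0.congrOfEquivalence E (fun P => finite_toMatrixModCat_obj R _ _)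
    (fun Q => finite_toModuleCat_obj R _ _), fun P Q ⟨e⟩ => ?_⟩
  rw [K0.congrOfEquivalence_mk]
  -- the `Mₙ(R)`-action on `Pⁿ` from the definitions is definitionally Mathlib's `Matrix.Module`
  exact (K0.mk_eq_mk_of_linearEquiv e).symm
end

section
/- Let F be a skew-field, G a group, and suppose the group ring FG is stably finite. If p ∈ FG is an idempotent with ε(p) = 0 for the augmentation ε : FG → F, and some power of the ideal (p) is stably free in the sense that (p)^k ⊕ FG^m ≅ FG^m as FG-modules, then p = 0. -/
universe u

/-- The augmentation ring homomorphism `ε : F G → F`, sending `Σ r_g g` to `Σ r_g`. -/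
noncomputable def augmentation (F : Type u) [DivisionRing F] (G : Type u) [Group G] :
    MonoidAlgebra F G →+* F :=
  MonoidAlgebra.liftNCRingHom (RingHom.id F) 1 (fun x _ => by simp [Commute.one_right])

section Aux

variable {R : Type*} [Ring R] {n : ℕ}

/-- The (transposed) matrix of an endomorphism of `R^n`. -/
def lmat (f : (Fin n → R) →ₗ[R] (Fin n → R)) : Matrix (Fin n) (Fin n) R :=
  fun j i => f (Pi.single j 1) i

lemma lmat_apply (f : (Fin n → R) →ₗ[R] (Fin n → R)) (x : Fin n → R) (i : Fin n) :
    f x i = ∑ j, x j * lmat f j i := by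
  have hx : x = ∑ j : Fin n, x j • (Pi.single j 1 : Fin n → R) := by
    ext i
    simp [Pi.single_apply]
  conv_lhs => rw [hx]
  rw [map_sum]
  simp [lmat, Finset.sum_apply]

lemma lmat_comp (f g : (Fin n → R) →ₗ[R] (Fin n → R)) :
    lmat (f ∘ₗ g) = lmat g * lmat f := by
  ext j i
  rw [Matrix.mul_apply]
  show f (g (Pi.single j 1)) i = _
  rw [lmat_apply f (g (Pi.single j 1)) i]
  rfl

lemma lmat_id : lmat (LinearMap.id : (Fin n → R) →ₗ[R] (Fin n → R)) = 1 := by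
  ext j i
  simp [lmat, Matrix.one_apply, Pi.single_apply, eq_comm]

lemma lmat_injective :
    Function.Injective (lmat : ((Fin n → R) →ₗ[R] (Fin n → R)) → _) := by
  intro f g hfg
  apply LinearMap.ext
  intro x
  funext i
  rw [lmat_apply, lmat_apply, hfg]

end Aux

/-- Let `F` be a skew-field, `G` a group, and suppose the group ring `F G` is stably
finite.  If `p ∈ F G` is an idempotent with `ε(p) = 0` for the augmentation
`ε : F G → F`, and some power of the ideal `(p)` is stably free in the sense that
`(p)^k ⊕ (F G)^m ≅ (F G)^m` as `F G`-modules, then `p = 0`. -/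
theorem idempotent_eq_zero_of_stablyFinite
    (F : Type u) [DivisionRing F] (G : Type u) [Group G]
    (hsf : ∀ (n : ℕ) (A B : Matrix (Fin n) (Fin n) (MonoidAlgebra F G)),
      A * B = 1 → B * A = 1)
    (p : MonoidAlgebra F G) (hp : p * p = p) (haug : augmentation F G p = 0)
    (k m : ℕ) (hk : 1 ≤ k)
    (h : Nonempty
      (((Fin k → (Ideal.span {p} : Ideal (MonoidAlgebra F G))) × (Fin m → MonoidAlgebra F G))
        ≃ₗ[MonoidAlgebra F G] (Fin m → MonoidAlgebra F G))) :
    p = 0 := by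
  obtain ⟨e⟩ := h
  let R := MonoidAlgebra F G
  let I : Ideal R := Ideal.span {p}
  -- split injection/surjection on R^m
  let f : (Fin m → R) →ₗ[R] (Fin m → R) :=
    e.toLinearMap ∘ₗ LinearMap.inr R (Fin k → I) (Fin m → R)
  let g : (Fin m → R) →ₗ[R] (Fin m → R) :=
    LinearMap.snd R (Fin k → I) (Fin m → R) ∘ₗ e.symm.toLinearMap
  have hgf : g ∘ₗ f = LinearMap.id := by
    apply LinearMap.ext
    intro x
    show (LinearMap.snd R (Fin k → I) (Fin m → R)) (e.symm (e (0, x))) = x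
    rw [e.symm_apply_apply]
    rfl
  have hmat : lmat f * lmat g = 1 := by
    rw [← lmat_comp, hgf, lmat_id]
  have hmat' : lmat g * lmat f = 1 := hsf m _ _ hmat
  have hfg : f ∘ₗ g = LinearMap.id := by
    apply lmat_injective
    rw [lmat_comp, hmat', lmat_id]
  -- now: for any a : Fin k → I, a = 0
  have ha : ∀ a : Fin k → I, a = 0 := by
    intro a
    have h1 : f (g (e (a, 0))) = e (a, 0) := by
      have := congrArg (fun φ => φ (e (a, 0))) hfg
      simpa using this
    have h2 : e (0, g (e (a, 0))) = e (a, 0) := h1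
    have h3 : ((0 : Fin k → I), g (e (a, 0))) = (a, 0) := e.injective h2
    exact (Prod.mk.injEq _ _ _ _ ▸ h3).1.symm
  have hpI : p ∈ I := Ideal.subset_span rfl
  have := congrArg (fun a => (a ⟨0, hk⟩ : R)) (ha fun _ => ⟨p, hpI⟩)
  simpa using this
end
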